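/- Let u be a nonconstant inner function and let B_{e₁} : K_u → K_u^⊥ be the operator B_{e₁} f = (I − P_{K_u})(e₁ · f) (i.e., B_φ with symbol φ(ζ) = ζ). Then m(B_{e₁}) = 0 if dim K_u > 1, and m(B_{e₁}) = √(1 − |u(0)|²) if dim K_u = 1. -/

import Mathlib

open MeasureTheory Complex
open scoped InnerProductSpace ENNReal

noncomputable section

namespace DTTO

instance fact2pi : Fact (0 < 2 * Real.pi) := ⟨by positivity⟩

/-- The circle, realized as `ℝ / 2πℤ`. -/
abbrev 𝕋c := AddCircle (2 * Real.pi)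

/-- Normalized Haar (Lebesgue) measure on the circle. -/
abbrev μT : Measure 𝕋c := AddCircle.haarAddCircle

/-- `L²(𝕋)`. -/
abbrev L2 := Lp ℂ 2 μT

/-- `L∞(𝕋)`. -/
abbrev Linf := Lp ℂ ⊤ μT

lemma memL2_smul (φ : Linf) (f : L2) : MemLp (⇑φ • ⇑f) 2 μT :=
  (Lp.memLp f).smul (Lp.memLp φ)

/-- Multiplication operator `M_φ : L² → L²` by a function `φ ∈ L∞`. -/
def Mmul (φ : Linf) : L2 →L[ℂ] L2 :=
  LinearMap.mkContinuous
    { toFun := fun f => (memL2_smul φ f).toLp _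
      map_add' := fun f g => by
        refine Lp.ext ?_
        filter_upwards [MemLp.coeFn_toLp (memL2_smul φ (f + g)),
          MemLp.coeFn_toLp (memL2_smul φ f), MemLp.coeFn_toLp (memL2_smul φ g),
          Lp.coeFn_add f g,
          Lp.coeFn_add ((memL2_smul φ f).toLp _) ((memL2_smul φ g).toLp _)] with
            x h1 h2 h3 h4 h5
        rw [h1, h5]
        simp only [Pi.add_apply, h2, h3]
        simp only [Pi.smul_apply', h4, Pi.add_apply, smul_add]
      map_smul' := fun c f => by
        refine Lp.ext ?_
        filter_upwards [MemLp.coeFn_toLp (memL2_smul φ (c • f)),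
          MemLp.coeFn_toLp (memL2_smul φ f),
          Lp.coeFn_smul c f,
          Lp.coeFn_smul c ((memL2_smul φ f).toLp _)] with x h1 h2 h3 h4
        rw [h1, RingHom.id_apply, h4]
        simp only [Pi.smul_apply, Pi.smul_apply', h2, h3]
        exact smul_comm _ _ _ }
    ‖φ‖ (fun f => by
      simp only [LinearMap.coe_mk, AddHom.coe_mk]
      rw [Lp.norm_toLp, Lp.norm_def, Lp.norm_def]
      rw [← ENNReal.toReal_mul]
      refine ENNReal.toReal_mono ?_ ?_
      · exact ENNReal.mul_ne_top (Lp.eLpNorm_ne_top φ) (Lp.eLpNorm_ne_top f)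
      · exact eLpNorm_smul_le_eLpNorm_top_mul_eLpNorm 2 (Lp.aestronglyMeasurable f) ⇑φ)

/-- The canonical inclusion `L∞ ⊆ L²` (the measure is finite). -/
def toL2 (φ : Linf) : L2 := ((Lp.memLp φ).mono_exponent le_top).toLp _

/-- The Hardy space `H²`, the closed linear span in `L²` of the exponentials `e_n`, `n ≥ 0`. -/
def H2 : Submodule ℂ L2 :=
  (Submodule.span ℂ (Set.range fun n : ℕ => (fourierLp 2 (n : ℤ) : L2))).topologicalClosure

instance : CompleteSpace H2 := (Submodule.isClosed_topologicalClosure _).completeSpace_coe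

/-- `H²₋ = L² ⊖ H²`. -/
def Hminus : Submodule ℂ L2 := H2ᗮ

instance : CompleteSpace Hminus := (Submodule.isClosed_orthogonal _).completeSpace_coe

/-- `H∞ = H² ∩ L∞`. -/
def MemHinf (φ : Linf) : Prop := toL2 φ ∈ H2

/-- An inner function: an element of `H² ∩ L∞` of modulus one a.e. -/
structure IsInnerFn (u : Linf) : Prop where
  memH2 : MemHinf u
  unimod : ∀ᵐ z ∂μT, ‖u z‖ = 1

/-- `u` is nonconstant (not a.e. equal to a constant). -/
def Nonconst (u : Linf) : Prop := ¬ ∃ c : ℂ, (⇑u : 𝕋c → ℂ) =ᵐ[μT] fun _ => c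

/-- The subspace `uH²` of `L²`. -/
def uH2 (u : Linf) : Submodule ℂ L2 := H2.map (Mmul u).toLinearMap

/-- The model space `K_u = H² ⊖ uH² = H² ∩ (uH²)ᗮ`. -/
def Ku (u : Linf) : Submodule ℂ L2 := H2 ⊓ (uH2 u)ᗮ

lemma isClosed_Ku (u : Linf) : IsClosed ((Ku u : Set L2)) := by
  have h : (Ku u : Set L2) = (H2 : Set L2) ∩ ((uH2 u)ᗮ : Set L2) := rfl
  rw [h]
  exact (Submodule.isClosed_topologicalClosure _).inter (Submodule.isClosed_orthogonal _)

instance (u : Linf) : CompleteSpace (Ku u) := (isClosed_Ku u).completeSpace_coe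

/-- `K_u^⊥ = L² ⊖ K_u`. -/
def KuP (u : Linf) : Submodule ℂ L2 := (Ku u)ᗮ

instance (u : Linf) : CompleteSpace (KuP u) := (Submodule.isClosed_orthogonal _).completeSpace_coe

/-- Dual truncated Toeplitz operator `D_φ` on `K_u^⊥`. -/
def Dop (u φ : Linf) : KuP u →L[ℂ] KuP u :=
  Submodule.orthogonalProjectionOnto (KuP u) ∘L Mmul φ ∘L (KuP u).subtypeL

/-- Truncated Toeplitz operator `A_φ` on `K_u`. -/
def Aop (u φ : Linf) : Ku u →L[ℂ] Ku u :=
  Submodule.orthogonalProjectionOnto (Ku u) ∘L Mmul φ ∘L (Ku u).subtypeL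

/-- The operator `B_φ : K_u → K_u^⊥`, `B_φ f = (I - P_{K_u})(φ f)`. -/
def Bop (u φ : Linf) : Ku u →L[ℂ] KuP u :=
  Submodule.orthogonalProjectionOnto (KuP u) ∘L Mmul φ ∘L (Ku u).subtypeL

/-- Toeplitz operator `T_φ : H² → H²`. -/
def Top (φ : Linf) : H2 →L[ℂ] H2 :=
  Submodule.orthogonalProjectionOnto H2 ∘L Mmul φ ∘L H2.subtypeL

/-- Hankel operator `H_φ : H² → H²₋`. -/
def Hop (φ : Linf) : H2 →L[ℂ] Hminus :=
  Submodule.orthogonalProjectionOnto Hminus ∘L Mmul φ ∘L H2.subtypeL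

/-- The exponential `e₁(ζ) = ζ` as an element of `L∞`. -/
def e1 : Linf := fourierLp ⊤ 1

/-- The exponential `e₋₁(ζ) = ζ̄` as an element of `L∞`. -/
def eneg1 : Linf := fourierLp ⊤ (-1)

/-- The operator `Q : H²₋ → H²₋`, `Q g = P₋(e₁ g)`. -/
def Qop : Hminus →L[ℂ] Hminus :=
  Submodule.orthogonalProjectionOnto Hminus ∘L Mmul e1 ∘L Hminus.subtypeL

/-- `u(0)`, the 0-th Fourier coefficient. -/
def coef0 (u : Linf) : ℂ := fourierCoeff (⇑u) 0

/-- Minimum modulus of a bounded operator. -/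
def minMod {E F : Type*} [NormedAddCommGroup E] [NormedSpace ℂ E]
    [NormedAddCommGroup F] [NormedSpace ℂ F] (T : E →L[ℂ] F) : ℝ :=
  ⨅ x : {x : E // ‖x‖ = 1}, ‖T x.1‖

/-- Complex conjugation on `L∞`. -/
lemma memLinf_star (φ : Linf) : MemLp (fun z => (starRingEnd ℂ) (φ z)) ⊤ μT := by
  refine ⟨continuous_star.comp_aestronglyMeasurable (Lp.aestronglyMeasurable φ), ?_⟩
  rw [eLpNorm_congr_norm_ae (g := ⇑φ) (Filter.Eventually.of_forall fun z => norm_star _)]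
  exact Lp.eLpNorm_lt_top φ

/-- The complex conjugate `φ̄ ∈ L∞` of `φ ∈ L∞`. -/
def conjL (φ : Linf) : Linf := (memLinf_star φ).toLp _

lemma memLinf_mul (φ ψ : Linf) : MemLp (⇑φ • ⇑ψ) ⊤ μT :=
  (Lp.memLp ψ).smul (Lp.memLp φ)

/-- The pointwise product of two elements of `L∞`. -/
def mulL (φ ψ : Linf) : Linf := (memLinf_mul φ ψ).toLp _

end DTTO

namespace DTTO

lemma inner_fourierLp_eq_zero {m n : ℤ} (h : m ≠ n) :
    (inner ℂ (fourierLp 2 m : L2) (fourierLp 2 n : L2) : ℂ) = 0 := by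
  have hcoe := congrFun (coe_fourierBasis (T := 2 * Real.pi))
  have h2 := (fourierBasis (T := 2 * Real.pi)).orthonormal.2 (i := m) (j := n) h
  simpa only [hcoe] using h2

lemma span_le_orth_em1 :
    Submodule.span ℂ (Set.range fun n : ℕ => (fourierLp 2 (n : ℤ) : L2))
      ≤ (ℂ ∙ (fourierLp 2 (-1) : L2))ᗮ := by
  rw [Submodule.span_le]
  rintro x ⟨n, rfl⟩
  rw [SetLike.mem_coe, Submodule.mem_orthogonal]
  intro w hw
  obtain ⟨c, rfl⟩ := Submodule.mem_span_singleton.1 hw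
  rw [inner_smul_left, inner_fourierLp_eq_zero (by omega : (-1 : ℤ) ≠ (n : ℤ)), mul_zero]

lemma H2_le_orth_em1 : H2 ≤ (ℂ ∙ (fourierLp 2 (-1) : L2))ᗮ :=
  Submodule.topologicalClosure_minimal _ span_le_orth_em1 (Submodule.isClosed_orthogonal _)

/-- `e₋₁ ∈ H²₋`. -/
lemma em1_mem : (fourierLp 2 (-1) : L2) ∈ Hminus := by
  unfold Hminus
  rw [Submodule.mem_orthogonal]
  intro v hv
  have h := H2_le_orth_em1 hv
  rw [Submodule.mem_orthogonal] at h
  exact inner_eq_zero_symm.mp (h _ (Submodule.mem_span_singleton_self _))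

/-- `e₋₁` as an element of `H²₋`. -/
def em1 : Hminus := ⟨(fourierLp 2 (-1) : L2), em1_mem⟩

/-- For `f ∈ K_u`, the function `u f ∈ uH² ⊆ K_u^⊥`. -/
lemma mul_mem_KuP (u : Linf) (f : Ku u) : Mmul u (f : L2) ∈ KuP u := by
  unfold KuP
  rw [Submodule.mem_orthogonal]
  intro v hv
  have hv2 : v ∈ (uH2 u)ᗮ := (Submodule.mem_inf.1 hv).2
  have hm : Mmul u (f : L2) ∈ uH2 u :=
    Submodule.mem_map_of_mem (Submodule.mem_inf.1 f.2).1
  rw [Submodule.mem_orthogonal] at hv2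
  exact inner_eq_zero_symm.mp (hv2 _ hm)

lemma Ku_le_H2 (u : Linf) : Ku u ≤ H2 := inf_le_left

/-- The inclusion `K_u ⊆ H²` as a continuous linear map. -/
def KuIncl (u : Linf) : Ku u →L[ℂ] H2 :=
  LinearMap.mkContinuous (Submodule.inclusion (Ku_le_H2 u)) 1
    (fun f => by rw [one_mul]; exact le_of_eq rfl)

end DTTO

/-!
For `f ∈ K_u` the function `z f` differs from `⟪u, z f⟫ u ∈ uH² ⊆ K_u^⊥` by an element of `K_u`,
so `B_{e₁} f = ⟪k̃₀, f⟫ u` with `k̃₀ = z̄ (u - u(0)) ∈ K_u`, and `‖B_{e₁} f‖ = |⟪k̃₀, f⟫|`.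
Since `‖k̃₀‖² = 1 - |u(0)|²` and `k̃₀ ≠ 0` for nonconstant `u`, the minimum modulus is `0` when
some unit vector of `K_u` is orthogonal to `k̃₀` (`dim K_u > 1`), and `‖k̃₀‖` when every unit
vector is a unimodular multiple of `k̃₀ / ‖k̃₀‖` (`dim K_u = 1`).
-/

namespace DTTO

section MinMod

variable {E F : Type*} [NormedAddCommGroup E] [NormedAddCommGroup F] [NormedSpace ℂ F]

lemma minMod_eq_zero_of_apply_eq_zero [NormedSpace ℂ E] {T : E →L[ℂ] F} {x : E}
    (hx : ‖x‖ = 1) (hTx : T x = 0) : minMod T = 0 := by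
  have hbdd : BddBelow (Set.range fun y : {x : E // ‖x‖ = 1} => ‖T y.1‖) :=
    ⟨0, by rintro _ ⟨y, rfl⟩; exact norm_nonneg _⟩
  refine le_antisymm ?_ (Real.iInf_nonneg fun _ => norm_nonneg _)
  calc minMod T ≤ ‖T x‖ := ciInf_le hbdd ⟨x, hx⟩
    _ = 0 := by rw [hTx, norm_zero]

lemma minMod_eq_of_forall_norm_apply_eq [NormedSpace ℂ E] {T : E →L[ℂ] F} {c : ℝ}
    [Nonempty {x : E // ‖x‖ = 1}] (h : ∀ x : E, ‖x‖ = 1 → ‖T x‖ = c) :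
    minMod T = c :=
  (iInf_congr fun x : {x : E // ‖x‖ = 1} => h x.1 x.2).trans ciInf_const

variable [InnerProductSpace ℂ E] {T : E →L[ℂ] F} {k : E}

lemma minMod_eq_zero_of_one_lt_rank (hT : ∀ x, ‖T x‖ = ‖⟪k, x⟫_ℂ‖)
    (hE : 1 < Module.rank ℂ E) : minMod T = 0 := by
  obtain ⟨x, hx, hkx⟩ : ∃ x : E, x ≠ 0 ∧ ⟪k, x⟫_ℂ = 0 := by
    by_contra! h
    have hinj : Function.Injective (innerₛₗ ℂ k) :=
      (injective_iff_map_eq_zero _).2 fun x hx => by_contra fun hx0 => h x hx0 hx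
    exact hE.not_ge (by simpa using (innerₛₗ ℂ k).lift_rank_le_of_injective hinj)
  refine minMod_eq_zero_of_apply_eq_zero (norm_smul_inv_norm (𝕜 := ℂ) hx) ?_
  rw [← norm_eq_zero, hT, inner_smul_right, hkx, mul_zero, norm_zero]

lemma minMod_eq_norm_of_rank_eq_one (hT : ∀ x, ‖T x‖ = ‖⟪k, x⟫_ℂ‖) (hk : k ≠ 0)
    (hE : Module.rank ℂ E = 1) : minMod T = ‖k‖ := by
  have hspan := (finrank_eq_one_iff_of_nonzero' k hk).1
    (Module.finrank_eq_of_rank_eq (by rw [hE, Nat.cast_one]))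
  have : Nonempty {x : E // ‖x‖ = 1} := ⟨⟨_, norm_smul_inv_norm (𝕜 := ℂ) hk⟩⟩
  refine minMod_eq_of_forall_norm_apply_eq fun x hx => ?_
  obtain ⟨c, rfl⟩ := hspan x
  rw [norm_smul] at hx
  rw [hT, inner_smul_right, norm_mul, inner_self_eq_norm_sq_to_K, norm_pow, RCLike.norm_ofReal,
    abs_norm, pow_two, ← mul_assoc, hx, one_mul]

end MinMod

section Multiplication

lemma coeFn_Mmul (φ : Linf) (f : L2) : ⇑(Mmul φ f) =ᵐ[μT] ⇑φ • ⇑f :=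
  MemLp.coeFn_toLp (memL2_smul φ f)

lemma coeFn_toL2 (φ : Linf) : ⇑(toL2 φ) =ᵐ[μT] ⇑φ := MemLp.coeFn_toLp _

lemma coeFn_conjL (φ : Linf) : ⇑(conjL φ) =ᵐ[μT] fun z => (starRingEnd ℂ) (φ z) :=
  MemLp.coeFn_toLp _

lemma inner_eq_integral (f g : L2) :
    ⟪f, g⟫_ℂ = ∫ z, (starRingEnd ℂ) (f z) * g z ∂μT := by
  simp only [L2.inner_def, RCLike.inner_apply']

lemma inner_fourierLp_fourierLp (m n : ℤ) :
    ⟪(fourierLp 2 m : L2), (fourierLp 2 n : L2)⟫_ℂ = if m = n then 1 else 0 := by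
  simpa only [coe_fourierBasis] using
    orthonormal_iff_ite.1 (fourierBasis (T := 2 * Real.pi)).orthonormal m n

lemma norm_fourierLp (n : ℤ) : ‖(fourierLp 2 n : L2)‖ = 1 := by
  simpa only [coe_fourierBasis] using (fourierBasis (T := 2 * Real.pi)).orthonormal.1 n

lemma inner_fourierLp_eq_fourierCoeff (n : ℤ) (f : L2) :
    ⟪(fourierLp 2 n : L2), f⟫_ℂ = fourierCoeff f n := by
  rw [← fourierBasis_repr, HilbertBasis.repr_apply_apply, coe_fourierBasis]

lemma inner_fourierLp_toL2 (n : ℤ) (φ : Linf) :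
    ⟪(fourierLp 2 n : L2), toL2 φ⟫_ℂ = fourierCoeff φ n := by
  rw [inner_fourierLp_eq_fourierCoeff, fourierCoeff_congr_ae (coeFn_toL2 φ)]

lemma Mmul_comm (φ ψ : Linf) (f : L2) : Mmul φ (Mmul ψ f) = Mmul ψ (Mmul φ f) := by
  refine Lp.ext ?_
  filter_upwards [coeFn_Mmul φ (Mmul ψ f), coeFn_Mmul ψ (Mmul φ f), coeFn_Mmul ψ f,
    coeFn_Mmul φ f] with z h₁ h₂ h₃ h₄
  simp only [h₁, h₂, Pi.smul_apply', h₃, h₄, smul_eq_mul]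
  ring

lemma Mmul_fourierLp (m n : ℤ) :
    Mmul (fourierLp ⊤ m) (fourierLp 2 n) = (fourierLp 2 (m + n) : L2) := by
  refine Lp.ext ?_
  filter_upwards [coeFn_Mmul (fourierLp ⊤ m) (fourierLp 2 n), coeFn_fourierLp ⊤ m,
    coeFn_fourierLp 2 n, coeFn_fourierLp 2 (m + n)] with z h₁ h₂ h₃ h₄
  rw [h₁, Pi.smul_apply', h₂, h₃, h₄, fourier_add, smul_eq_mul]

lemma Mmul_fourierLp_zero (φ : Linf) : Mmul φ (fourierLp 2 0) = toL2 φ := by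
  refine Lp.ext ?_
  filter_upwards [coeFn_toL2 φ, coeFn_Mmul φ (fourierLp 2 0), coeFn_fourierLp 2 0]
    with z h₁ h₂ h₃
  rw [h₁, h₂, Pi.smul_apply', h₃, fourier_zero, smul_eq_mul, mul_one]

lemma conjL_fourierLp (n : ℤ) : conjL (fourierLp ⊤ n) = fourierLp ⊤ (-n) := by
  refine Lp.ext ?_
  filter_upwards [coeFn_conjL (fourierLp ⊤ n), coeFn_fourierLp ⊤ n, coeFn_fourierLp ⊤ (-n)]
    with z h₁ h₂ h₃
  rw [h₁, h₂, h₃, fourier_neg]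

lemma inner_Mmul_right (φ : Linf) (x f : L2) :
    ⟪x, Mmul φ f⟫_ℂ = ⟪Mmul (conjL φ) x, f⟫_ℂ := by
  rw [inner_eq_integral, inner_eq_integral]
  refine integral_congr_ae ?_
  filter_upwards [coeFn_Mmul φ f, coeFn_Mmul (conjL φ) x, coeFn_conjL φ] with z h₁ h₂ h₃
  simp only [h₁, h₂, h₃, Pi.smul_apply', smul_eq_mul, map_mul, Complex.conj_conj]
  ring

lemma inner_Mmul_Mmul_of_unimodular {ψ : Linf} (hψ : ∀ᵐ z ∂μT, ‖ψ z‖ = 1) (x y : L2) :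
    ⟪Mmul ψ x, Mmul ψ y⟫_ℂ = ⟪x, y⟫_ℂ := by
  rw [inner_eq_integral, inner_eq_integral]
  refine integral_congr_ae ?_
  filter_upwards [coeFn_Mmul ψ x, coeFn_Mmul ψ y, hψ] with z h₁ h₂ h₃
  have hconj : (starRingEnd ℂ) (ψ z) * ψ z = 1 := by
    rw [Complex.conj_mul', h₃, Complex.ofReal_one, one_pow]
  simp only [h₁, h₂, Pi.smul_apply', smul_eq_mul, map_mul]
  linear_combination (starRingEnd ℂ (x z) * y z) * hconj

lemma norm_Mmul_of_unimodular {ψ : Linf} (hψ : ∀ᵐ z ∂μT, ‖ψ z‖ = 1) (x : L2) :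
    ‖Mmul ψ x‖ = ‖x‖ := by
  rw [norm_eq_sqrt_re_inner (𝕜 := ℂ), inner_Mmul_Mmul_of_unimodular hψ,
    ← norm_eq_sqrt_re_inner]

lemma fourierLp_unimodular (n : ℤ) : ∀ᵐ z ∂μT, ‖(fourierLp ⊤ n : Linf) z‖ = 1 := by
  filter_upwards [coeFn_fourierLp ⊤ n] with z h
  rw [h]
  exact Circle.norm_coe _

lemma inner_fourierLp_Mmul_fourierLp (k m : ℤ) (f : L2) :
    ⟪(fourierLp 2 m : L2), Mmul (fourierLp ⊤ k) f⟫_ℂ =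
      ⟪(fourierLp 2 (m - k) : L2), f⟫_ℂ := by
  rw [inner_Mmul_right, conjL_fourierLp, Mmul_fourierLp, neg_add_eq_sub]

lemma Mmul_fourierLp_eq_Mmul_toL2 (φ : Linf) (n : ℤ) :
    Mmul φ (fourierLp 2 n) = Mmul (fourierLp ⊤ n) (toL2 φ) := by
  rw [← Mmul_fourierLp_zero, Mmul_comm, Mmul_fourierLp, add_zero]

end Multiplication

section Hardy

lemma fourierLp_mem_H2 (n : ℕ) : (fourierLp 2 (n : ℤ) : L2) ∈ H2 :=
  Submodule.le_topologicalClosure _ (Submodule.subset_span ⟨n, rfl⟩)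

lemma map_eq_zero_of_mem_H2 {F : Type*} [AddCommGroup F] [Module ℂ F] [TopologicalSpace F]
    [T2Space F] (T : L2 →L[ℂ] F) (hT : ∀ n : ℕ, T (fourierLp 2 (n : ℤ)) = 0) {f : L2}
    (hf : f ∈ H2) : T f = 0 := by
  refine Submodule.topologicalClosure_minimal _ ?_ T.isClosed_ker hf
  rw [Submodule.span_le]
  rintro _ ⟨n, rfl⟩
  exact hT n

lemma mem_H2_iff {f : L2} :
    f ∈ H2 ↔ ∀ m : ℤ, m < 0 → ⟪(fourierLp 2 m : L2), f⟫_ℂ = 0 := by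
  refine ⟨fun hf m hm =>
    map_eq_zero_of_mem_H2 (innerSL ℂ (fourierLp 2 m : L2)) (fun n => ?_) hf,
    fun h => ?_⟩
  · rw [innerSL_apply_apply, inner_fourierLp_fourierLp, if_neg (by omega)]
  · refine (Submodule.isClosed_topologicalClosure _).mem_of_tendsto
      (hasSum_fourier_series_L2 f) (Filter.Eventually.of_forall fun s => Submodule.sum_mem _ ?_)
    intro m _
    rcases lt_or_ge m 0 with hm | hm
    · rw [← inner_fourierLp_eq_fourierCoeff, h m hm, zero_smul]
      exact Submodule.zero_mem _
    · lift m to ℕ using hm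
      exact Submodule.smul_mem _ _ (fourierLp_mem_H2 m)

lemma Mmul_e1_mem_H2 {f : L2} (hf : f ∈ H2) : Mmul e1 f ∈ H2 :=
  mem_H2_iff.2 fun m hm => by
    rw [e1, inner_fourierLp_Mmul_fourierLp]
    exact mem_H2_iff.1 hf _ (by omega)

lemma mem_orthogonal_uH2_iff (u : Linf) {x : L2} :
    x ∈ (uH2 u)ᗮ ↔ ∀ n : ℕ, ⟪Mmul u (fourierLp 2 (n : ℤ)), x⟫_ℂ = 0 := by
  refine ⟨fun hx n => Submodule.inner_right_of_mem_orthogonal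
    (Submodule.mem_map_of_mem (fourierLp_mem_H2 n)) hx, fun h => ?_⟩
  rw [Submodule.mem_orthogonal]
  rintro _ ⟨f, hf, rfl⟩
  rw [inner_eq_zero_symm]
  refine map_eq_zero_of_mem_H2 (innerSL ℂ x ∘L Mmul u) (fun n => ?_) hf
  rw [ContinuousLinearMap.comp_apply, innerSL_apply_apply, inner_eq_zero_symm]
  exact h n

lemma uH2_le_KuP (u : Linf) : uH2 u ≤ KuP u :=
  (Submodule.le_orthogonal_orthogonal _).trans (Submodule.orthogonal_le inf_le_right)

lemma toL2_mem_KuP (u : Linf) : toL2 u ∈ KuP u := by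
  rw [← Mmul_fourierLp_zero]
  exact uH2_le_KuP u (Submodule.mem_map_of_mem (fourierLp_mem_H2 0))

end Hardy

section ModelSpace

variable {u : Linf}

lemma inner_toL2_self (hu : IsInnerFn u) : ⟪toL2 u, toL2 u⟫_ℂ = 1 := by
  rw [← Mmul_fourierLp_zero, inner_Mmul_Mmul_of_unimodular hu.unimod, inner_fourierLp_fourierLp,
    if_pos rfl]

lemma norm_toL2 (hu : IsInnerFn u) : ‖toL2 u‖ = 1 := by
  rw [← Mmul_fourierLp_zero, norm_Mmul_of_unimodular hu.unimod, norm_fourierLp]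

def conjKernel (u : Linf) : L2 := Mmul eneg1 (toL2 u - coef0 u • (fourierLp 2 0 : L2))

lemma conjKernel_eq_sub (u : Linf) :
    conjKernel u = Mmul eneg1 (toL2 u) - coef0 u • (fourierLp 2 (-1) : L2) := by
  rw [conjKernel, map_sub, map_smul, eneg1, Mmul_fourierLp, add_zero]

lemma conjKernel_mem_H2 (hu : IsInnerFn u) : conjKernel u ∈ H2 := by
  refine mem_H2_iff.2 fun m hm => ?_
  rw [conjKernel, eneg1, inner_fourierLp_Mmul_fourierLp, inner_sub_right, inner_smul_right,
    inner_fourierLp_fourierLp]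
  rcases (show m = -1 ∨ m < -1 by omega) with rfl | hm
  · rw [if_pos (by norm_num), inner_fourierLp_toL2, coef0]
    norm_num
  · rw [if_neg (by omega), mul_zero, sub_zero]
    exact mem_H2_iff.1 hu.memH2 _ (by omega)

lemma conjKernel_mem_orthogonal_uH2 (hu : IsInnerFn u) : conjKernel u ∈ (uH2 u)ᗮ := by
  refine (mem_orthogonal_uH2_iff u).2 fun n => ?_
  have h₁ : ⟪Mmul u (fourierLp 2 n), Mmul eneg1 (toL2 u)⟫_ℂ = 0 := by
    rw [eneg1, inner_Mmul_right, conjL_fourierLp, Mmul_comm, neg_neg, Mmul_fourierLp,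
      ← Mmul_fourierLp_zero u, inner_Mmul_Mmul_of_unimodular hu.unimod,
      inner_fourierLp_fourierLp, if_neg (by omega)]
  have h₂ : ⟪Mmul u (fourierLp 2 n), (fourierLp 2 (-1) : L2)⟫_ℂ = 0 := by
    rw [← inner_conj_symm, Mmul_fourierLp_eq_Mmul_toL2, inner_fourierLp_Mmul_fourierLp,
      mem_H2_iff.1 hu.memH2 _ (by omega), map_zero]
  rw [conjKernel_eq_sub, inner_sub_right, inner_smul_right, h₁, h₂, mul_zero, sub_zero]

lemma conjKernel_mem_Ku (hu : IsInnerFn u) : conjKernel u ∈ Ku u :=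
  ⟨conjKernel_mem_H2 hu, conjKernel_mem_orthogonal_uH2 hu⟩

lemma norm_conjKernel_sq (hu : IsInnerFn u) : ‖conjKernel u‖ ^ 2 = 1 - ‖coef0 u‖ ^ 2 := by
  have hperp :
      ⟪toL2 u - coef0 u • (fourierLp 2 0 : L2), coef0 u • (fourierLp 2 0 : L2)⟫_ℂ = 0 := by
    rw [inner_smul_right, inner_sub_left, inner_smul_left, inner_fourierLp_fourierLp, if_pos rfl,
      ← inner_conj_symm, inner_fourierLp_toL2, coef0, mul_one, sub_self, mul_zero]
  have hpyth := norm_add_sq_eq_norm_sq_add_norm_sq_of_inner_eq_zero _ _ hperp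
  rw [sub_add_cancel, norm_toL2 hu, norm_smul, norm_fourierLp, mul_one] at hpyth
  rw [conjKernel, eneg1, norm_Mmul_of_unimodular (fourierLp_unimodular _)]
  linear_combination -hpyth

lemma conjKernel_ne_zero (hnc : Nonconst u) : conjKernel u ≠ 0 := by
  intro h
  rw [conjKernel, eneg1, ← norm_eq_zero, norm_Mmul_of_unimodular (fourierLp_unimodular _),
    norm_eq_zero, sub_eq_zero] at h
  refine hnc ⟨coef0 u, (coeFn_toL2 u).symm.trans ?_⟩
  rw [h]
  filter_upwards [Lp.coeFn_smul (coef0 u) (fourierLp 2 0 : L2), coeFn_fourierLp 2 0]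
    with z h₁ h₂
  rw [h₁, Pi.smul_apply, h₂, fourier_zero, smul_eq_mul, mul_one]

lemma inner_toL2_Mmul_e1 {f : L2} (hf : f ∈ H2) :
    ⟪toL2 u, Mmul e1 f⟫_ℂ = ⟪conjKernel u, f⟫_ℂ := by
  rw [conjKernel_eq_sub, inner_sub_left, inner_smul_left, mem_H2_iff.1 hf (-1) (by norm_num),
    mul_zero, sub_zero, e1, inner_Mmul_right, conjL_fourierLp, eneg1]

lemma Mmul_e1_sub_mem_Ku (hu : IsInnerFn u) {f : L2} (hf : f ∈ Ku u) :
    Mmul e1 f - ⟪toL2 u, Mmul e1 f⟫_ℂ • toL2 u ∈ Ku u := by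
  obtain ⟨hfH2, hfu⟩ := hf
  refine ⟨H2.sub_mem (Mmul_e1_mem_H2 hfH2) (H2.smul_mem _ hu.memH2),
    (mem_orthogonal_uH2_iff u).2 fun n => ?_⟩
  rw [inner_sub_right, inner_smul_right]
  rcases n with _ | n
  · rw [Nat.cast_zero, Mmul_fourierLp_zero, inner_toL2_self hu, mul_one, sub_self]
  · have h₁ : ⟪Mmul u (fourierLp 2 ((n + 1 : ℕ) : ℤ)), Mmul e1 f⟫_ℂ = 0 := by
      rw [e1, inner_Mmul_right, conjL_fourierLp, Mmul_comm, Mmul_fourierLp,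
        show -1 + ((n + 1 : ℕ) : ℤ) = n by omega]
      exact (mem_orthogonal_uH2_iff u).1 hfu n
    have h₂ : ⟪Mmul u (fourierLp 2 ((n + 1 : ℕ) : ℤ)), toL2 u⟫_ℂ = 0 := by
      rw [← Mmul_fourierLp_zero, inner_Mmul_Mmul_of_unimodular hu.unimod,
        inner_fourierLp_fourierLp, if_neg (by omega)]
    rw [h₁, h₂, mul_zero, sub_zero]

lemma coe_Bop_e1_apply (hu : IsInnerFn u) (f : Ku u) :
    (Bop u e1 f : L2) = ⟪conjKernel u, f⟫_ℂ • toL2 u := by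
  rw [← inner_toL2_Mmul_e1 (Ku_le_H2 u f.2)]
  exact Submodule.eq_starProjection_of_mem_orthogonal' ((KuP u).smul_mem _ (toL2_mem_KuP u))
    (Submodule.le_orthogonal_orthogonal _ (Mmul_e1_sub_mem_Ku hu f.2)) (add_sub_cancel _ _).symm

lemma norm_Bop_e1_apply (hu : IsInnerFn u) (f : Ku u) :
    ‖Bop u e1 f‖ = ‖⟪(⟨conjKernel u, conjKernel_mem_Ku hu⟩ : Ku u), f⟫_ℂ‖ := by
  rw [Submodule.coe_inner, Submodule.coe_norm, coe_Bop_e1_apply hu, norm_smul, norm_toL2 hu,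
    mul_one]

end ModelSpace

/-- `m(B_{e₁}) = 0` if `dim K_u > 1`, and `m(B_{e₁}) = √(1 - |u(0)|²)` if
`dim K_u = 1`. -/
theorem minMod_B_shift (u : Linf) (hu : IsInnerFn u) (hnc : Nonconst u) :
    (1 < Module.rank ℂ (Ku u) → minMod (Bop u e1) = 0)
    ∧ (Module.rank ℂ (Ku u) = 1 →
        minMod (Bop u e1) = Real.sqrt (1 - ‖coef0 u‖ ^ 2)) := by
  have hk : (⟨conjKernel u, conjKernel_mem_Ku hu⟩ : Ku u) ≠ 0 :=
    fun h => conjKernel_ne_zero hnc (congrArg Subtype.val h)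
  refine ⟨minMod_eq_zero_of_one_lt_rank (norm_Bop_e1_apply hu), fun hrank => ?_⟩
  rw [minMod_eq_norm_of_rank_eq_one (norm_Bop_e1_apply hu) hk hrank, ← norm_conjKernel_sq hu,
    Real.sqrt_sq (norm_nonneg _)]
  rfl

end DTTO
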